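/- Let X be any k-dimensional simplicial complex on a finite vertex set V. Then φ(X) ≤ h̃(X); moreover, if φ(K(X)) > 0 (equivalently, the completion K(X) has trivial (k−1)-st Z₂-cohomology), then h̃(X) ≤ (|V|/φ(K(X)))·φ(X). -/

import Mathlib

/-!
Everything rests on `|δ_{K(X)} f| ≤ |V|·|[f]|`: adding a coboundary does not change `δ f`, and
each `k`-face of `K(X)` on which `δ f` is nonzero arises from a `(k-1)`-face in the support of `f`
by adding one of the `|V|` vertices. Dividing gives `|δ_X f| / |[f]| ≤ |V|·|δ_X f| / |δ_{K(X)} f|`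
for every `f`, hence `φ(X) ≤ h̃(X)`. For the upper bound take `f` attaining the (finite) minimum
`φ(X)`; since `X` and `K(X)` share their `(k-1)`-faces, `φ(K(X))·|[f]| ≤ |δ_{K(X)} f|`, and
substituting this into the quotient defining `h̃(X)` at `f` gives the claim.
-/

open Finset

namespace HigherCheeger

variable {V : Type*} [DecidableEq V] [Fintype V] [LinearOrder V]

/-- An abstract simplicial complex: a family of finite subsets of `V`
closed under taking subsets. -/
def IsComplex (X : Finset (Finset V)) : Prop :=
  ∀ σ ∈ X, ∀ τ ⊆ σ, τ ∈ X

/-- `X` is `k`-dimensional: every face has at most `k+1` vertices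
and some face has exactly `k+1` vertices. -/
def IsDim (X : Finset (Finset V)) (k : ℕ) : Prop :=
  (∀ σ ∈ X, σ.card ≤ k + 1) ∧ ∃ σ ∈ X, σ.card = k + 1

/-- The faces of `X` of cardinality `c` (i.e. of dimension `c - 1`). -/
def faces (X : Finset (Finset V)) (c : ℕ) : Finset (Finset V) :=
  X.filter fun σ => σ.card = c

/-- `X` has complete `(k-1)`-skeleton: every subset of `V` of size at most `k` is a face. -/
def CompleteSkeleton (X : Finset (Finset V)) (k : ℕ) : Prop :=
  ∀ σ : Finset V, σ.card ≤ k → σ ∈ X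

/-- The `k`-dimensional completion `K(X)`. -/
def completion (X : Finset (Finset V)) (k : ℕ) : Finset (Finset V) :=
  X ∪ (Finset.univ.filter fun τ : Finset V => τ.card = k + 1 ∧ ∀ v ∈ τ, τ.erase v ∈ X)

/-- The complete `k`-dimensional complex `K_n^k` on the vertex set `V`. -/
def completeComplex (V : Type*) [DecidableEq V] [Fintype V] (k : ℕ) : Finset (Finset V) :=
  Finset.univ.filter fun σ : Finset V => σ.card ≤ k + 1

/-- The oriented incidence number `[τ:σ]` (with respect to the linear order on `V`):
`(-1)^j` if `σ = τ \ {v_j}` where `v_j` is the `j`-th smallest vertex of `τ`, and `0` otherwise. -/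
def incidence (τ σ : Finset V) : ℝ :=
  if σ ⊆ τ ∧ σ.card + 1 = τ.card then
    ∑ v ∈ τ \ σ, (-1 : ℝ) ^ (τ.filter fun w => w < v).card
  else 0

/-- The real coboundary operator `δ` applied to a cochain living on the faces of
cardinality `c`; the result lives on faces of cardinality `c + 1`. -/
def delta (X : Finset (Finset V)) (c : ℕ) (f : Finset V → ℝ) : Finset V → ℝ :=
  fun τ => ∑ σ ∈ faces X c, incidence τ σ * f σ

/-- The real boundary operator `∂` (the adjoint of `δ`) applied to a cochain living
on the faces of cardinality `c`; the result lives on faces of cardinality `c - 1`. -/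
def bdry (X : Finset (Finset V)) (c : ℕ) (f : Finset V → ℝ) : Finset V → ℝ :=
  fun σ => ∑ τ ∈ faces X c, incidence τ σ * f τ

/-- The inner product of two cochains on the faces of cardinality `c`. -/
def inn (X : Finset (Finset V)) (c : ℕ) (f g : Finset V → ℝ) : ℝ :=
  ∑ σ ∈ faces X c, f σ * g σ

/-- The upper Laplacian `L^up_{k-1} = ∂_k δ_{k-1}` acting on `(k-1)`-cochains
(functions on faces of cardinality `k`). -/
def lapUp (X : Finset (Finset V)) (k : ℕ) (f : Finset V → ℝ) : Finset V → ℝ :=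
  bdry X (k + 1) (delta X k f)

/-- The lower Laplacian `L^down_{k-1} = δ_{k-2} ∂_{k-1}` acting on `(k-1)`-cochains. -/
def lapDown (X : Finset (Finset V)) (k : ℕ) (f : Finset V → ℝ) : Finset V → ℝ :=
  delta X (k - 1) (bdry X k f)

/-- `f ∈ Z_{k-1}(X;ℝ) = ker ∂_{k-1}`. -/
def IsCycle (X : Finset (Finset V)) (k : ℕ) (f : Finset V → ℝ) : Prop :=
  ∀ σ : Finset V, bdry X k f σ = 0

/-- `f ∈ B^{k-1}(X;ℝ) = im δ_{k-2}` (as a cochain, i.e. on the `(k-1)`-faces). -/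
def IsCobdry (X : Finset (Finset V)) (k : ℕ) (f : Finset V → ℝ) : Prop :=
  ∃ g : Finset V → ℝ, ∀ σ ∈ faces X k, f σ = delta X (k - 1) g σ

/-- The spectral gap `λ(X)`: the minimum of the Rayleigh quotient
`⟨L^up_{k-1}(X) f, f⟩ / ⟨f, f⟩` over nonzero `f ∈ Z_{k-1}(X;ℝ)`. -/
noncomputable def spectralGap (X : Finset (Finset V)) (k : ℕ) : ℝ :=
  sInf {r : ℝ | ∃ f : Finset V → ℝ, IsCycle X k f ∧ inn X k f f ≠ 0 ∧
    r = inn X k (lapUp X k f) f / inn X k f f}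

/-- A partition of `V` into `m` (nonempty) parts. -/
def IsPartition {m : ℕ} (A : Fin m → Finset V) : Prop :=
  (∀ i, (A i).Nonempty) ∧ ∀ v : V, ∃! i, v ∈ A i

/-- The linear order on `V` is adapted to the family of parts `A`. -/
def OrderAdapted {m : ℕ} (A : Fin m → Finset V) : Prop :=
  ∀ i j : Fin m, i < j → ∀ v ∈ A i, ∀ w ∈ A j, v < w

/-- `F(A_0,…,A_k)`: the `k`-faces of `X` with exactly one vertex in each part. -/
def Fset (X : Finset (Finset V)) (k : ℕ) (A : Fin (k + 1) → Finset V) : Finset (Finset V) :=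
  (faces X (k + 1)).filter fun τ => ∀ i, (τ ∩ A i).card = 1

/-- `F^∂(A_0,…,A_k)`: the `(k+1)`-element members of `K(X)` with exactly one vertex
in each part. -/
def Fpar (X : Finset (Finset V)) (k : ℕ) (A : Fin (k + 1) → Finset V) : Finset (Finset V) :=
  (faces (completion X k) (k + 1)).filter fun τ => ∀ i, (τ ∩ A i).card = 1

/-- The value `|V|·|F(A_0,…,A_k)| / |F^∂(A_0,…,A_k)|` of a partition
(`⊤` if the denominator is `0`). -/
noncomputable def cheegerVal (X : Finset (Finset V)) (k : ℕ) (A : Fin (k + 1) → Finset V) :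
    EReal :=
  if (Fpar X k A).card = 0 then ⊤
  else (((Fintype.card V * (Fset X k A).card : ℝ) / ((Fpar X k A).card : ℝ) : ℝ) : EReal)

/-- The Cheeger constant `h(X)`. -/
noncomputable def cheeger (X : Finset (Finset V)) (k : ℕ) : EReal :=
  sInf {r : EReal | ∃ A : Fin (k + 1) → Finset V, IsPartition A ∧ r = cheegerVal X k A}

/-- `d(σ)`: the number of members of `F^∂(A_0,…,A_k)` containing `σ`. -/
def degPar (X : Finset (Finset V)) (k : ℕ) (A : Fin (k + 1) → Finset V) (σ : Finset V) : ℕ :=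
  ((Fpar X k A).filter fun τ => σ ⊆ τ).card

/-- `C(X)` (with respect to the partition `A`):
the maximum over `τ ∈ F^∂(A_0,…,A_k)` of `∑_{v ∈ τ} d(τ \ {v})`. -/
def Cconst (X : Finset (Finset V)) (k : ℕ) (A : Fin (k + 1) → Finset V) : ℕ :=
  (Fpar X k A).sup fun τ => ∑ v ∈ τ, degPar X k A (τ.erase v)

/-- The cochain associated to a partition `A`: `σ ↦ (-1)^l·|A_l|` if `A_l` is the unique
part disjoint from `σ`, and `0` otherwise. -/
def assocCochain {k : ℕ} (A : Fin (k + 1) → Finset V) (σ : Finset V) : ℝ :=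
  if (Finset.univ.filter fun l => σ ∩ A l = ∅).card = 1 then
    ∑ l ∈ Finset.univ.filter fun l => σ ∩ A l = ∅, (-1 : ℝ) ^ (l : ℕ) * ((A l).card : ℝ)
  else 0

/-- The `Z₂`-coboundary: a `(c-1)`-cochain `f` is sent to
`τ ↦ ∑_{v ∈ τ} f (τ \ {v})`. -/
def deltaZ2 (f : Finset V → ZMod 2) (τ : Finset V) : ZMod 2 :=
  ∑ v ∈ τ, f (τ.erase v)

/-- The support of the `Z₂`-coboundary of `f` in `X`: the faces of `X` of cardinality
`k + 1` on which the `Z₂`-coboundary of `f` is nonzero.  Its cardinality is `|δ_X f|`. -/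
def suppDelta (X : Finset (Finset V)) (k : ℕ) (f : Finset V → ZMod 2) : Finset (Finset V) :=
  (faces X (k + 1)).filter fun τ => deltaZ2 f τ ≠ 0

/-- `F(A_0,…,A_{k-1})`: the `(k-1)`-faces of `X` with exactly one vertex in each of
the `k` parts. -/
def FsetLow (X : Finset (Finset V)) (k : ℕ) (A : Fin k → Finset V) : Finset (Finset V) :=
  (faces X k).filter fun σ => ∀ i, (σ ∩ A i).card = 1

/-- The Cheeger-type constant `h'(X)`. -/
noncomputable def cheeger' (X : Finset (Finset V)) (k : ℕ) : EReal :=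
  sInf {r : EReal | ∃ (A : Fin k → Finset V) (f : Finset V → ZMod 2),
    IsPartition A ∧ (∀ σ, f σ ≠ 0 → σ ∈ FsetLow X k A) ∧
    r = if (suppDelta (completion X k) k f).card = 0 then (⊤ : EReal)
        else (((Fintype.card V * (suppDelta X k f).card : ℝ) /
              ((suppDelta (completion X k) k f).card : ℝ) : ℝ) : EReal)}

/-- The Hamming norm of a `Z₂`-cochain on the faces of cardinality `c`. -/
def hamming (X : Finset (Finset V)) (c : ℕ) (f : Finset V → ZMod 2) : ℕ :=
  ((faces X c).filter fun σ => f σ ≠ 0).card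

/-- `|[f]|`: the minimum Hamming norm of `f + δ_X g` over `g ∈ C^{k-2}(X;Z₂)`. -/
noncomputable def normClass (X : Finset (Finset V)) (k : ℕ) (f : Finset V → ZMod 2) : ℕ :=
  sInf {m : ℕ | ∃ g : Finset V → ZMod 2, m = hamming X k fun σ => f σ + deltaZ2 g σ}

/-- The coboundary expansion `φ(X) = min_f |δ_X f| / |[f]|` (quotients with denominator
`0` are `∞`). -/
noncomputable def phi (X : Finset (Finset V)) (k : ℕ) : EReal :=
  sInf {r : EReal | ∃ f : Finset V → ZMod 2,
    r = if normClass X k f = 0 then (⊤ : EReal)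
        else ((((suppDelta X k f).card : ℝ) / (normClass X k f : ℝ) : ℝ) : EReal)}

/-- `h̃(X) = min_f |V|·|δ_X f| / |δ_{K(X)} f|` (quotients with denominator `0` are `∞`). -/
noncomputable def htilde (X : Finset (Finset V)) (k : ℕ) : EReal :=
  sInf {r : EReal | ∃ f : Finset V → ZMod 2,
    r = if (suppDelta (completion X k) k f).card = 0 then (⊤ : EReal)
        else (((Fintype.card V * (suppDelta X k f).card : ℝ) /
              ((suppDelta (completion X k) k f).card : ℝ) : ℝ) : EReal)}

theorem _root_.exists_eq_sInf_setOf_of_finite {α β : Type*} [Finite α] [Nonempty α]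
    [ConditionallyCompleteLinearOrder β] (F : α → β) :
    ∃ a, F a = sInf {r | ∃ a, r = F a} := by
  have hrange : {r | ∃ a, r = F a} = Set.range F := by
    ext r
    simp [eq_comm]
  rw [hrange]
  exact (Set.range_nonempty F).csInf_mem (Set.finite_range F)

section Coboundary

variable {V : Type*} [DecidableEq V]

theorem deltaZ2_deltaZ2 (g : Finset V → ZMod 2) (τ : Finset V) :
    deltaZ2 (deltaZ2 g) τ = 0 := by
  -- the terms indexed by `(v, w)` and `(w, v)` are equal, so they cancel in characteristic 2
  unfold deltaZ2
  rw [sum_sigma']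
  refine sum_involution (fun p _ => ⟨p.2, p.1⟩) ?_ ?_ ?_ fun _ _ => rfl
  · rintro ⟨v, w⟩ -
    rw [erase_right_comm]
    exact CharTwo.add_self_eq_zero _
  · rintro ⟨v, w⟩ hvw - h
    simp only [mem_sigma, mem_erase] at hvw
    exact hvw.2.1 (congrArg Sigma.fst h)
  · rintro ⟨v, w⟩ hvw
    simp only [mem_sigma, mem_erase] at hvw ⊢
    exact ⟨hvw.2.2, fun h => hvw.2.1 h.symm, hvw.1⟩

theorem deltaZ2_add_deltaZ2 (f g : Finset V → ZMod 2) (τ : Finset V) :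
    deltaZ2 (fun σ => f σ + deltaZ2 g σ) τ = deltaZ2 f τ := by
  rw [show deltaZ2 (fun σ => f σ + deltaZ2 g σ) τ = deltaZ2 f τ + deltaZ2 (deltaZ2 g) τ from
    sum_add_distrib, deltaZ2_deltaZ2, add_zero]

theorem suppDelta_add_deltaZ2 (Y : Finset (Finset V)) (k : ℕ) (f g : Finset V → ZMod 2) :
    suppDelta Y k (fun σ => f σ + deltaZ2 g σ) = suppDelta Y k f :=
  filter_congr fun τ _ => by rw [deltaZ2_add_deltaZ2]

theorem deltaZ2_single_erase {τ : Finset V} {v : V} (hv : v ∈ τ) :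
    deltaZ2 (Pi.single (τ.erase v) 1) τ = 1 := by
  unfold deltaZ2
  rw [sum_eq_single_of_mem v hv, Pi.single_eq_same]
  intro w hw hwv
  exact Pi.single_eq_of_ne (fun h => hwv (erase_injOn τ hw hv h)) _

theorem exists_normClass_eq (X : Finset (Finset V)) (k : ℕ) (f : Finset V → ZMod 2) :
    ∃ g : Finset V → ZMod 2, normClass X k f = hamming X k fun σ => f σ + deltaZ2 g σ :=
  Nat.sInf_mem (s := {m | ∃ g : Finset V → ZMod 2, m = hamming X k fun σ => f σ + deltaZ2 g σ})
    ⟨_, 0, rfl⟩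

theorem phi_le_of_normClass_ne_zero (X : Finset (Finset V)) (k : ℕ) (f : Finset V → ZMod 2)
    (hf : normClass X k f ≠ 0) :
    phi X k ≤ ((((suppDelta X k f).card : ℝ) / (normClass X k f : ℝ) : ℝ) : EReal) :=
  sInf_le ⟨f, by rw [if_neg hf]⟩

end Coboundary

section Completion

variable {V : Type*} [DecidableEq V] [Fintype V] {X : Finset (Finset V)} {k : ℕ}

theorem faces_completion (X : Finset (Finset V)) (k : ℕ) :
    faces (completion X k) k = faces X k := by
  ext σ
  simp only [faces, completion, mem_filter, mem_union, mem_univ, true_and]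
  constructor
  · rintro ⟨h | ⟨h, -⟩, hσ⟩
    · exact ⟨h, hσ⟩
    · omega
  · rintro ⟨h, hσ⟩
    exact ⟨Or.inl h, hσ⟩

theorem normClass_completion (X : Finset (Finset V)) (k : ℕ) (f : Finset V → ZMod 2) :
    normClass (completion X k) k f = normClass X k f := by
  unfold normClass hamming
  rw [faces_completion]

theorem erase_mem_faces_of_mem_faces_completion (hX : IsComplex X) {τ : Finset V}
    (hτ : τ ∈ faces (completion X k) (k + 1)) {v : V} (hv : v ∈ τ) :
    τ.erase v ∈ faces X k := by
  obtain ⟨hτK, hcard⟩ := mem_filter.mp hτ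
  refine mem_filter.mpr ⟨?_, by rw [card_erase_of_mem hv, hcard, Nat.add_sub_cancel]⟩
  rcases mem_union.mp hτK with h | h
  · exact hX τ h _ (erase_subset v τ)
  · exact (mem_filter.mp h).2.2 v hv

theorem card_suppDelta_completion_le_hamming (hX : IsComplex X) (h : Finset V → ZMod 2) :
    (suppDelta (completion X k) k h).card ≤ Fintype.card V * hamming X k h := by
  have hcover : suppDelta (completion X k) k h ⊆
      ((faces X k).filter fun σ => h σ ≠ 0).biUnion fun σ => univ.image fun w => insert w σ := by
    intro τ hτ
    obtain ⟨hτK, hδ⟩ := mem_filter.mp hτ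
    obtain ⟨v, hv, hval⟩ : ∃ v ∈ τ, h (τ.erase v) ≠ 0 := by
      by_contra! hzero
      exact hδ (sum_eq_zero hzero)
    exact mem_biUnion.mpr ⟨τ.erase v,
      mem_filter.mpr ⟨erase_mem_faces_of_mem_faces_completion hX hτK hv, hval⟩,
      mem_image.mpr ⟨v, mem_univ v, insert_erase hv⟩⟩
  rw [mul_comm]
  exact (card_le_card hcover).trans
    (card_biUnion_le_card_mul _ _ _ fun σ _ => card_image_le.trans (card_univ).le)

theorem card_suppDelta_completion_le_normClass (hX : IsComplex X) (f : Finset V → ZMod 2) :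
    (suppDelta (completion X k) k f).card ≤ Fintype.card V * normClass X k f := by
  obtain ⟨g, hg⟩ := exists_normClass_eq X k f
  rw [hg, ← suppDelta_add_deltaZ2 _ _ f g]
  exact card_suppDelta_completion_le_hamming hX _

theorem exists_normClass_ne_zero (hX : IsComplex X) (hdim : IsDim X k) :
    ∃ f : Finset V → ZMod 2, normClass X k f ≠ 0 := by
  obtain ⟨τ, hτ, hcard⟩ := hdim.2
  obtain ⟨v, hv⟩ : τ.Nonempty := card_pos.mp (by omega)
  refine ⟨Pi.single (τ.erase v) 1, fun h0 => ?_⟩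
  have hsupp : τ ∈ suppDelta (completion X k) k (Pi.single (τ.erase v) 1) :=
    mem_filter.mpr ⟨mem_filter.mpr ⟨mem_union_left _ hτ, hcard⟩,
      by rw [deltaZ2_single_erase hv]; exact one_ne_zero⟩
  have hle := card_suppDelta_completion_le_normClass (k := k) hX (Pi.single (τ.erase v) 1)
  rw [h0, mul_zero, Nat.le_zero, card_eq_zero] at hle
  simp [hle] at hsupp

theorem exists_phi_eq (X : Finset (Finset V)) (k : ℕ) :
    ∃ f : Finset V → ZMod 2, phi X k = if normClass X k f = 0 then (⊤ : EReal)
      else ((((suppDelta X k f).card : ℝ) / (normClass X k f : ℝ) : ℝ) : EReal) := by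
  obtain ⟨f, hf⟩ := exists_eq_sInf_setOf_of_finite fun f : Finset V → ZMod 2 =>
    if normClass X k f = 0 then (⊤ : EReal)
    else ((((suppDelta X k f).card : ℝ) / (normClass X k f : ℝ) : ℝ) : EReal)
  exact ⟨f, hf.symm⟩

theorem phi_lt_top (hX : IsComplex X) (hdim : IsDim X k) : phi X k < ⊤ := by
  obtain ⟨f, hf⟩ := exists_normClass_ne_zero hX hdim
  exact (phi_le_of_normClass_ne_zero X k f hf).trans_lt (EReal.coe_lt_top _)

theorem htilde_le_of_card_ne_zero (f : Finset V → ZMod 2)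
    (hf : (suppDelta (completion X k) k f).card ≠ 0) :
    htilde X k ≤ (((Fintype.card V * (suppDelta X k f).card : ℝ) /
      ((suppDelta (completion X k) k f).card : ℝ) : ℝ) : EReal) :=
  sInf_le ⟨f, by rw [if_neg hf]⟩

theorem phi_le_of_card_suppDelta_completion_ne_zero (hX : IsComplex X) (f : Finset V → ZMod 2)
    (hf : (suppDelta (completion X k) k f).card ≠ 0) :
    phi X k ≤ (((Fintype.card V * (suppDelta X k f).card : ℝ) /
      ((suppDelta (completion X k) k f).card : ℝ) : ℝ) : EReal) := by
  have hle : ((suppDelta (completion X k) k f).card : ℝ) ≤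
      Fintype.card V * (normClass X k f : ℝ) := by
    exact_mod_cast card_suppDelta_completion_le_normClass hX f
  have hm : normClass X k f ≠ 0 := by
    rintro h0
    rw [h0, Nat.cast_zero, mul_zero, Nat.cast_nonpos] at hle
    exact hf hle
  refine (phi_le_of_normClass_ne_zero X k f hm).trans (EReal.coe_le_coe_iff.mpr ?_)
  rw [div_le_div_iff₀ (by positivity) (by positivity)]
  nlinarith [Nat.cast_nonneg (α := ℝ) (suppDelta X k f).card]

theorem htilde_le_div_phi_completion_mul (hK : 0 < phi (completion X k) k)
    (f : Finset V → ZMod 2) (hf : normClass X k f ≠ 0) :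
    htilde X k ≤ ((Fintype.card V : ℝ) : EReal) / phi (completion X k) k *
      ((((suppDelta X k f).card : ℝ) / (normClass X k f : ℝ) : ℝ) : EReal) := by
  have hKle := phi_le_of_normClass_ne_zero (completion X k) k f
    (by rwa [normClass_completion])
  rw [normClass_completion] at hKle
  obtain ⟨p, hp⟩ : ∃ p : ℝ, phi (completion X k) k = p :=
    ⟨_, (EReal.coe_toReal (hKle.trans_lt (EReal.coe_lt_top _)).ne (ne_bot_of_gt hK)).symm⟩
  rw [hp, EReal.coe_pos] at hK
  rw [hp, EReal.coe_le_coe_iff, le_div_iff₀ (by positivity)] at hKle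
  have hb : (suppDelta (completion X k) k f).card ≠ 0 := by
    rintro h0
    rw [h0, Nat.cast_zero] at hKle
    exact (mul_pos hK (Nat.cast_pos.mpr (Nat.pos_of_ne_zero hf))).not_ge hKle
  refine (htilde_le_of_card_ne_zero f hb).trans ?_
  rw [hp, ← EReal.coe_div, ← EReal.coe_mul, EReal.coe_le_coe_iff]
  calc (Fintype.card V * (suppDelta X k f).card : ℝ) / (suppDelta (completion X k) k f).card
      ≤ (Fintype.card V * (suppDelta X k f).card : ℝ) / (p * normClass X k f) :=
        div_le_div_of_nonneg_left (by positivity) (by positivity) hKle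
    _ = Fintype.card V / p * ((suppDelta X k f).card / normClass X k f) :=
        (div_mul_div_comm _ _ _ _).symm

end Completion

theorem phi_le_htilde_and_upper_bound_general
    {V : Type*} [DecidableEq V] [Fintype V]
    (X : Finset (Finset V)) (k : ℕ)
    (hX : IsComplex X) (hdim : IsDim X k) :
    phi X k ≤ htilde X k ∧
      (0 < phi (completion X k) k →
        htilde X k ≤
          (((Fintype.card V : ℝ) : EReal) / phi (completion X k) k) * phi X k) := by
  refine ⟨le_sInf ?_, fun hK => ?_⟩
  · rintro _ ⟨f, rfl⟩
    split_ifs with hf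
    · exact le_top
    · exact phi_le_of_card_suppDelta_completion_ne_zero hX f hf
  · obtain ⟨f, hf⟩ := exists_phi_eq X k
    have hm : normClass X k f ≠ 0 := fun h0 => (phi_lt_top hX hdim).ne (by rw [hf, if_pos h0])
    rw [hf, if_neg hm]
    exact htilde_le_div_phi_completion_mul hK f hm

/-- For any `k`-dimensional complex `X`: `φ(X) ≤ h̃(X)`; moreover, if `φ(K(X)) > 0`
then `h̃(X) ≤ (|V|/φ(K(X)))·φ(X)`. -/
theorem phi_le_htilde_and_upper_bound
    {V : Type*} [DecidableEq V] [Fintype V] [LinearOrder V]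
    (X : Finset (Finset V)) (k : ℕ)
    (hX : IsComplex X) (hdim : IsDim X k) :
    phi X k ≤ htilde X k ∧
      (0 < phi (completion X k) k →
        htilde X k ≤
          (((Fintype.card V : ℝ) : EReal) / phi (completion X k) k) * phi X k) :=
  phi_le_htilde_and_upper_bound_general X k hX hdim

end HigherCheeger
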